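/- Let p, u, v, w, q, z be real numbers. Define F : ℝ³ → Matrix 3 3 ℝ by F(y) = [[p, (u − v + (u+v)·e^{−2y₁})/2, (−u + v + (u+v)·e^{−2y₁})/2], [(w − z + (w+z)·e^{−2y₁})/2, q, −q], [(−w + z + (w+z)·e^{−2y₁})/2, −q, q]], let B(y) = (F(y) − F(y)ᵀ)/2 be its antisymmetric part, and define the torsion H_{ijk}(y) = ∂_{y_i}B_{jk}(y) + ∂_{y_j}B_{ki}(y) + ∂_{y_k}B_{ij}(y). Then H_{ijk}(y) = 0 for all indices i,j,k ∈ {1,2,3} and all y ∈ ℝ³, i.e. the sigma model on the Manin triple (3|1) is torsionless. -/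

import Mathlib

open Real Matrix

/-!
The torsion `H = dB` is totally antisymmetric, so on `ℝ³` it is determined by
`H₀₁₂ = ∂₀B₁₂ + ∂₁B₂₀ + ∂₂B₀₁`. The tensor `F31` depends on `y₀` alone, which kills the last two
terms, and its `(1,2)` and `(2,1)` entries are both `-q`, so `B₁₂ = 0` identically.
-/

/-- The torsion potential of a sigma model tensor `F`: its antisymmetric part. -/
noncomputable def Bpot (F : (Fin 3 → ℝ) → Matrix (Fin 3) (Fin 3) ℝ)
    (y : Fin 3 → ℝ) : Matrix (Fin 3) (Fin 3) ℝ :=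
  (1 / 2 : ℝ) • (F y - (F y)ᵀ)

/-- The torsion `H_{ijk} = ∂ᵢ B_{jk} + ∂ⱼ B_{ki} + ∂ₖ B_{ij}` of a sigma model
tensor `F`, where `∂ᵢ` is the partial derivative in the `i`-th coordinate. -/
noncomputable def torsionH (F : (Fin 3 → ℝ) → Matrix (Fin 3) (Fin 3) ℝ)
    (y : Fin 3 → ℝ) (i j k : Fin 3) : ℝ :=
  deriv (fun t => Bpot F (Function.update y i t) j k) (y i) +
  deriv (fun t => Bpot F (Function.update y j t) k i) (y j) +
  deriv (fun t => Bpot F (Function.update y k t) i j) (y k)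

/-- The tensor `F` of the sigma model on the Manin triple `(3|1)`. -/
noncomputable def F31 (p u v w q z : ℝ) (y : Fin 3 → ℝ) : Matrix (Fin 3) (Fin 3) ℝ :=
  !![p, (u - v + (u + v) * exp (-(2 * y 0))) / 2, (-u + v + (u + v) * exp (-(2 * y 0))) / 2;
     (w - z + (w + z) * exp (-(2 * y 0))) / 2,  q,  -q;
     (-w + z + (w + z) * exp (-(2 * y 0))) / 2, -q,  q]

section Torsion

variable (F : (Fin 3 → ℝ) → Matrix (Fin 3) (Fin 3) ℝ) (y : Fin 3 → ℝ)

lemma Bpot_apply (j k : Fin 3) : Bpot F y j k = (F y j k - F y k j) / 2 := by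
  simp only [Bpot, Matrix.smul_apply, Matrix.sub_apply, transpose_apply, smul_eq_mul]
  ring

lemma Bpot_swap (j k : Fin 3) : Bpot F y k j = -Bpot F y j k := by
  simp only [Bpot_apply]
  ring

lemma deriv_Bpot_swap (i j k : Fin 3) :
    deriv (fun t => Bpot F (Function.update y i t) k j) (y i) =
      -deriv (fun t => Bpot F (Function.update y i t) j k) (y i) := by
  simp only [Bpot_swap F _ j k]
  exact deriv.neg

lemma torsionH_swap (i j k : Fin 3) : torsionH F y j i k = -torsionH F y i j k := by
  simp only [torsionH, deriv_Bpot_swap F y j i k, deriv_Bpot_swap F y i k j,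
    deriv_Bpot_swap F y k j i]
  ring

lemma torsionH_cycle (i j k : Fin 3) : torsionH F y j k i = torsionH F y i j k := by
  simp only [torsionH]
  ring

lemma torsionH_self_left (i k : Fin 3) : torsionH F y i i k = 0 := by
  linarith [torsionH_swap F y i i k]

lemma torsionH_self_mid (i k : Fin 3) : torsionH F y i k i = 0 := by
  rw [torsionH_cycle, torsionH_self_left]

lemma torsionH_self_right (i k : Fin 3) : torsionH F y k i i = 0 := by
  rw [← torsionH_cycle, torsionH_self_left]

lemma torsionH_eq_zero_of_torsionH_012 (h : torsionH F y 0 1 2 = 0) (i j k : Fin 3) :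
    torsionH F y i j k = 0 := by
  have h120 := torsionH_cycle F y 0 1 2
  have h201 := torsionH_cycle F y 1 2 0
  have h102 := torsionH_swap F y 0 1 2
  have h021 := torsionH_swap F y 2 0 1
  have h210 := torsionH_swap F y 1 2 0
  fin_cases i <;> fin_cases j <;> fin_cases k <;>
    simp [torsionH_self_left, torsionH_self_mid, torsionH_self_right, h, h120, h201, h102,
      h021, h210]

end Torsion

section FirstCoordinate

variable {F : (Fin 3 → ℝ) → Matrix (Fin 3) (Fin 3) ℝ}

lemma deriv_Bpot_update_eq_zero_of_ne (hF : ∀ y y' : Fin 3 → ℝ, y 0 = y' 0 → F y = F y')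
    (y : Fin 3 → ℝ) {i : Fin 3} (hi : i ≠ 0) (j k : Fin 3) :
    deriv (fun t => Bpot F (Function.update y i t) j k) (y i) = 0 := by
  have hconst : (fun t => Bpot F (Function.update y i t) j k) = fun _ => Bpot F y j k := by
    funext t
    rw [Bpot, Bpot, hF _ y (Function.update_of_ne hi.symm t y)]
  rw [hconst, deriv_const]

lemma torsionH_012_eq_deriv (hF : ∀ y y' : Fin 3 → ℝ, y 0 = y' 0 → F y = F y')
    (y : Fin 3 → ℝ) :
    torsionH F y 0 1 2 = deriv (fun t => Bpot F (Function.update y 0 t) 1 2) (y 0) := by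
  rw [torsionH, deriv_Bpot_update_eq_zero_of_ne hF y one_ne_zero,
    deriv_Bpot_update_eq_zero_of_ne hF y (by decide : (2 : Fin 3) ≠ 0), add_zero, add_zero]

lemma torsionH_eq_zero_of_Bpot_12_eq_zero (hF : ∀ y y' : Fin 3 → ℝ, y 0 = y' 0 → F y = F y')
    (hB : ∀ y, Bpot F y 1 2 = 0) (y : Fin 3 → ℝ) (i j k : Fin 3) : torsionH F y i j k = 0 := by
  refine torsionH_eq_zero_of_torsionH_012 F y ?_ i j k
  simp only [torsionH_012_eq_deriv hF, hB, deriv_const]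

end FirstCoordinate

lemma F31_eq_of_apply_zero_eq (p u v w q z : ℝ) {y y' : Fin 3 → ℝ} (h : y 0 = y' 0) :
    F31 p u v w q z y = F31 p u v w q z y' := by
  rw [F31, F31, h]

lemma Bpot_F31_one_two_eq_zero (p u v w q z : ℝ) (y : Fin 3 → ℝ) :
    Bpot (F31 p u v w q z) y 1 2 = 0 := by
  simp [Bpot_apply, F31]

/-- The sigma model on the Manin triple `(3|1)` is torsionless. -/
theorem torsion31_eq_zero (p u v w q z : ℝ) :
    ∀ (y : Fin 3 → ℝ) (i j k : Fin 3), torsionH (F31 p u v w q z) y i j k = 0 :=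
  torsionH_eq_zero_of_Bpot_12_eq_zero (fun _ _ => F31_eq_of_apply_zero_eq p u v w q z)
    (Bpot_F31_one_two_eq_zero p u v w q z)
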